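/- Energy dissipation identity: for every two-species distribution ρ, nonnegative mobility values m^{(i)}_{ικ} ≥ 0, symmetric nonnegative edge weights η, β^{(1)},β^{(2)} > 0 and q > 1, one has ∑_{i=1}^{2} ∑_{ι=1}^{N} ( ∑_{k=1}^{2} ∑_{λ=1}^{N} K^{(ik)}(x_ι,x_λ) ρ^{(k)}_λ μ_λ ) μ_ι R^{(i)}_ι = − ∑_{i=1}^{2} (1/β^{(i)}) ∑_{ι,κ=1}^{N} m^{(i)}_{ικ} [(v^{(i)}_{ικ})_+]^{q} η_{ικ} μ_κ μ_ι, and this quantity is ≤ 0. -/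
import Mathlib


open Finset

/-- The upwind velocity `v^{(i)}_{ικ}` of the graph dynamics. -/
noncomputable def velGG {N d : ℕ} (x : Fin N → EuclideanSpace ℝ (Fin d)) (μ : Fin N → ℝ)
    (K : Fin 2 → Fin 2 → EuclideanSpace ℝ (Fin d) → EuclideanSpace ℝ (Fin d) → ℝ)
    (β : Fin 2 → ℝ) (ρ : Fin 2 → Fin N → ℝ) (i : Fin 2) (ι κ : Fin N) : ℝ :=
  β i * ∑ k : Fin 2, ∑ l : Fin N, (K i k (x ι) (x l) - K i k (x κ) (x l)) * ρ k l * μ l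

/-- The upwind right-hand side `R^{(i)}_ι` of the graph dynamics; `a₊ = max a 0` and
`a₋ = max (−a) 0`, and powers are real powers. -/
noncomputable def rhsGG {N d : ℕ} (x : Fin N → EuclideanSpace ℝ (Fin d)) (μ : Fin N → ℝ)
    (K : Fin 2 → Fin 2 → EuclideanSpace ℝ (Fin d) → EuclideanSpace ℝ (Fin d) → ℝ)
    (β : Fin 2 → ℝ) (η : Fin N → Fin N → ℝ) (m : Fin 2 → Fin N → Fin N → ℝ) (q : ℝ)
    (ρ : Fin 2 → Fin N → ℝ) (i : Fin 2) (ι : Fin N) : ℝ :=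
  ∑ κ : Fin N,
    (m i κ ι * (max (-(velGG x μ K β ρ i ι κ)) 0) ^ (q - 1)
      - m i ι κ * (max (velGG x μ K β ρ i ι κ) 0) ^ (q - 1)) * η ι κ * μ κ

/-- A two-species distribution: nonnegative densities with total mass one for each species. -/
def IsDistGG {N : ℕ} (μ : Fin N → ℝ) (ρ : Fin 2 → Fin N → ℝ) : Prop :=
  (∀ i ι, 0 ≤ ρ i ι) ∧ ∀ i, ∑ ι : Fin N, ρ i ι * μ ι = 1

/-- Energy dissipation identity: pairing the upwind right-hand side with the interaction
potential gives minus the (nonnegative) dissipation. -/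
theorem energy_dissipation_identity
    (N d : ℕ) (hN : 2 ≤ N) (hd : 1 ≤ d)
    (x : Fin N → EuclideanSpace ℝ (Fin d)) (hx : Function.Injective x)
    (μ : Fin N → ℝ) (hμ : ∀ ι, 0 < μ ι)
    (K : Fin 2 → Fin 2 → EuclideanSpace ℝ (Fin d) → EuclideanSpace ℝ (Fin d) → ℝ)
    (hKcont : ∀ i k, Continuous fun p : EuclideanSpace ℝ (Fin d) × EuclideanSpace ℝ (Fin d) =>
      K i k p.1 p.2)
    (hKsym : ∀ i k p q, K i k p q = K i k q p)
    (hK12 : ∀ p q, K 0 1 p q = K 1 0 p q)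
    (η : Fin N → Fin N → ℝ) (hη : ∀ ι κ, 0 ≤ η ι κ) (hηsym : ∀ ι κ, η ι κ = η κ ι)
    (β : Fin 2 → ℝ) (hβ : ∀ i, 0 < β i)
    (q : ℝ) (hq : 1 < q)
    (m : Fin 2 → Fin N → Fin N → ℝ) (hm : ∀ i ι κ, 0 ≤ m i ι κ)
    (ρ : Fin 2 → Fin N → ℝ) (hρ : IsDistGG μ ρ) :
    (∑ i : Fin 2, ∑ ι : Fin N,
        (∑ k : Fin 2, ∑ l : Fin N, K i k (x ι) (x l) * ρ k l * μ l) * μ ι *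
          rhsGG x μ K β η m q ρ i ι)
      = -(∑ i : Fin 2, (β i)⁻¹ * ∑ ι : Fin N, ∑ κ : Fin N,
          m i ι κ * (max (velGG x μ K β ρ i ι κ) 0) ^ q * η ι κ * (μ κ * μ ι)) ∧
    (∑ i : Fin 2, ∑ ι : Fin N,
        (∑ k : Fin 2, ∑ l : Fin N, K i k (x ι) (x l) * ρ k l * μ l) * μ ι *
          rhsGG x μ K β η m q ρ i ι) ≤ 0 := by
  have hvanti : ∀ (i : Fin 2) (ι κ : Fin N),
      velGG x μ K β ρ i κ ι = - velGG x μ K β ρ i ι κ := by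
    intro i ι κ
    unfold velGG
    rw [← mul_neg, ← Finset.sum_neg_distrib]
    refine congrArg _ (Finset.sum_congr rfl fun k _ => ?_)
    rw [← Finset.sum_neg_distrib]
    exact Finset.sum_congr rfl fun l _ => by ring
  have hpow : ∀ w : ℝ, w * (max w 0) ^ (q - 1) = (max w 0) ^ q := by
    intro w
    rcases le_or_gt w 0 with h | h
    · rw [max_eq_right h, Real.zero_rpow (by linarith), Real.zero_rpow (by linarith), mul_zero]
    · rw [max_eq_left h.le, mul_comm, ← Real.rpow_add_one h.ne', sub_add_cancel]
  have hphidiff : ∀ (i : Fin 2) (ι κ : Fin N),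
      (∑ k : Fin 2, ∑ l : Fin N, K i k (x κ) (x l) * ρ k l * μ l)
        - (∑ k : Fin 2, ∑ l : Fin N, K i k (x ι) (x l) * ρ k l * μ l)
      = -((β i)⁻¹ * velGG x μ K β ρ i ι κ) := by
    intro i ι κ
    unfold velGG
    rw [← mul_assoc, inv_mul_cancel₀ (hβ i).ne', one_mul, ← Finset.sum_neg_distrib,
      ← Finset.sum_sub_distrib]
    refine Finset.sum_congr rfl fun k _ => ?_
    rw [← Finset.sum_neg_distrib, ← Finset.sum_sub_distrib]
    exact Finset.sum_congr rfl fun l _ => by ring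
  have main : ∀ i : Fin 2,
      (∑ ι : Fin N, (∑ k : Fin 2, ∑ l : Fin N, K i k (x ι) (x l) * ρ k l * μ l) * μ ι *
          rhsGG x μ K β η m q ρ i ι)
      = -((β i)⁻¹ * ∑ ι : Fin N, ∑ κ : Fin N,
          m i ι κ * (max (velGG x μ K β ρ i ι κ) 0) ^ q * η ι κ * (μ κ * μ ι)) := by
    intro i
    have expand : (∑ ι : Fin N, (∑ k : Fin 2, ∑ l : Fin N, K i k (x ι) (x l) * ρ k l * μ l) * μ ι *
          rhsGG x μ K β η m q ρ i ι)
      = (∑ ι : Fin N, ∑ κ : Fin N,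
          (∑ k : Fin 2, ∑ l : Fin N, K i k (x ι) (x l) * ρ k l * μ l) * μ ι *
            (m i κ ι * (max (-(velGG x μ K β ρ i ι κ)) 0) ^ (q - 1) * η ι κ * μ κ))
        - (∑ ι : Fin N, ∑ κ : Fin N,
          (∑ k : Fin 2, ∑ l : Fin N, K i k (x ι) (x l) * ρ k l * μ l) * μ ι *
            (m i ι κ * (max (velGG x μ K β ρ i ι κ) 0) ^ (q - 1) * η ι κ * μ κ)) := by
      rw [← Finset.sum_sub_distrib]
      refine Finset.sum_congr rfl fun ι _ => ?_
      rw [rhsGG, Finset.mul_sum, ← Finset.sum_sub_distrib]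
      exact Finset.sum_congr rfl fun κ _ => by ring
    rw [expand, Finset.sum_comm, Finset.mul_sum, ← Finset.sum_neg_distrib,
      ← Finset.sum_sub_distrib]
    refine Finset.sum_congr rfl fun ι _ => ?_
    rw [Finset.mul_sum, ← Finset.sum_neg_distrib, ← Finset.sum_sub_distrib]
    refine Finset.sum_congr rfl fun κ _ => ?_
    rw [hvanti i ι κ, neg_neg, hηsym κ ι, ← hpow (velGG x μ K β ρ i ι κ)]
    have hd := hphidiff i ι κ
    linear_combination
      (m i ι κ * (max (velGG x μ K β ρ i ι κ) 0) ^ (q - 1) * η ι κ * (μ κ * μ ι)) * hd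
  have key : (∑ i : Fin 2, ∑ ι : Fin N,
        (∑ k : Fin 2, ∑ l : Fin N, K i k (x ι) (x l) * ρ k l * μ l) * μ ι *
          rhsGG x μ K β η m q ρ i ι)
      = -(∑ i : Fin 2, (β i)⁻¹ * ∑ ι : Fin N, ∑ κ : Fin N,
          m i ι κ * (max (velGG x μ K β ρ i ι κ) 0) ^ q * η ι κ * (μ κ * μ ι)) := by
    rw [← Finset.sum_neg_distrib]
    exact Finset.sum_congr rfl fun i _ => main i
  have hX : 0 ≤ ∑ i : Fin 2, (β i)⁻¹ * ∑ ι : Fin N, ∑ κ : Fin N,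
      m i ι κ * (max (velGG x μ K β ρ i ι κ) 0) ^ q * η ι κ * (μ κ * μ ι) :=
    Finset.sum_nonneg fun i _ => mul_nonneg (inv_nonneg.mpr (hβ i).le)
      (Finset.sum_nonneg fun ι _ => Finset.sum_nonneg fun κ _ =>
        mul_nonneg (mul_nonneg (mul_nonneg (hm i ι κ)
          (Real.rpow_nonneg (le_max_right _ _) q)) (hη ι κ))
          (mul_nonneg (hμ κ).le (hμ ι).le))
  exact ⟨key, by rw [key]; exact neg_nonpos.mpr hX⟩
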